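/- Let K be a real symmetric positive semidefinite n×n matrix whose diagonal entries all equal a constant c > 0, and let P, Q be probability vectors in ℝⁿ (nonnegative entries summing to 1). Then the nuclear norm of the matrix diag(√P) K diag(√Q) is at most c. -/

import Mathlib

/-!
Factor `K = Lᵀ L` and write `diag(√P) K diag(√Q) = Aᵀ B` with `A = L diag(√P)`,
`B = L diag(√Q)`. For right singular vectors `vᵢ` and left singular vectors `uᵢ` of `Aᵀ B`,
`σᵢ = ⟪A uᵢ, B vᵢ⟫ ≤ (‖A uᵢ‖² + ‖B vᵢ‖²) / 2`, and Bessel's inequality, applied row by row,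
bounds `∑ ‖A uᵢ‖²` by `tr (Aᵀ A) = ∑ Pᵢ Kᵢᵢ = c`; likewise for `B`.
-/

open Matrix

/-- The nuclear norm of a real matrix: the sum of its singular values, i.e. the
sum of the square roots of the eigenvalues of `Mᵀ M` (`Mᴴ = Mᵀ` over `ℝ`). -/
noncomputable def nuclearNorm {m n : Type*} [Fintype m] [Fintype n] [DecidableEq n]
    (M : Matrix m n ℝ) : ℝ :=
  ∑ i, Real.sqrt ((Matrix.isHermitian_conjTranspose_mul_self M).eigenvalues i)

open WithLp
open scoped InnerProductSpace

variable {l m n ι : Type*} [Fintype l] [Fintype m] [Fintype n] [Fintype ι]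
  [DecidableEq m] [DecidableEq n]

theorem Matrix.inner_toEuclideanLin_conjTranspose_mul [DecidableEq l]
    (A : Matrix l m ℝ) (B : Matrix l n ℝ) (x : EuclideanSpace ℝ m) (y : EuclideanSpace ℝ n) :
    ⟪x, toEuclideanLin (Aᴴ * B) y⟫_ℝ = ⟪toEuclideanLin A x, toEuclideanLin B y⟫_ℝ := by
  rw [toLpLin_mul_same, LinearMap.comp_apply, toEuclideanLin_conjTranspose_eq_adjoint,
    LinearMap.adjoint_inner_right]

theorem Matrix.sum_norm_sq_toEuclideanLin_le_trace (A : Matrix l m ℝ)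
    {u : ι → EuclideanSpace ℝ m} (hu : Orthonormal ℝ u) :
    ∑ i, ‖toEuclideanLin A (u i)‖ ^ 2 ≤ (Aᴴ * A).trace := by
  let a : l → EuclideanSpace ℝ m := fun r => toLp 2 (A r)
  have hrow : ∀ x, ‖toEuclideanLin A x‖ ^ 2 = ∑ r, ‖⟪x, a r⟫_ℝ‖ ^ 2 := by
    simp [a, EuclideanSpace.norm_sq_eq, toLpLin_apply, mulVec, dotProduct, PiLp.inner_apply]
  have htrace : (Aᴴ * A).trace = ∑ r, ‖a r‖ ^ 2 := by
    simp only [a, EuclideanSpace.norm_sq_eq, Real.norm_eq_abs, sq_abs]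
    simp only [trace, diag_apply, mul_apply, conjTranspose_apply, star_trivial, sq]
    exact Finset.sum_comm
  simp only [hrow]
  rw [Finset.sum_comm, htrace]
  exact Finset.sum_le_sum fun r _ => hu.sum_inner_products_le _

theorem exists_orthonormal_nuclearNorm_eq_sum_inner (M : Matrix m n ℝ) :
    ∃ (s : Finset n) (u : s → EuclideanSpace ℝ m) (v : s → EuclideanSpace ℝ n),
      Orthonormal ℝ u ∧ Orthonormal ℝ v ∧
        nuclearNorm M = ∑ i, ⟪u i, toEuclideanLin M (v i)⟫_ℝ := by
  set hM := isHermitian_conjTranspose_mul_self M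
  set w := hM.eigenvectorBasis
  set σ : n → ℝ := fun i => √(hM.eigenvalues i)
  have hinner : ∀ i j, ⟪toEuclideanLin M (w i), toEuclideanLin M (w j)⟫_ℝ =
      σ j ^ 2 * if i = j then 1 else 0 := by
    intro i j
    have hw : toEuclideanLin (Mᴴ * M) (w j) = hM.eigenvalues j • w j := by
      rw [toLpLin_apply, hM.mulVec_eigenvectorBasis]; rfl
    rw [← inner_toEuclideanLin_conjTranspose_mul, hw, inner_smul_right,
      orthonormal_iff_ite.mp w.orthonormal,
      Real.sq_sqrt (eigenvalues_conjTranspose_mul_self_nonneg M j)]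
  -- `σ i⁻¹ • M (w i)` are the left singular vectors; they are orthonormal where `σ i ≠ 0`.
  refine ⟨({i | σ i ≠ 0} : Finset n), fun i => (σ i)⁻¹ • toEuclideanLin M (w i), fun i => w i,
    ?_, w.orthonormal.comp _ Subtype.val_injective, ?_⟩
  · rw [orthonormal_iff_ite]
    rintro ⟨i, hi⟩ ⟨j, -⟩
    rw [Finset.mem_filter_univ] at hi
    simp only [real_inner_smul_left, real_inner_smul_right, hinner, Subtype.mk.injEq]
    split_ifs with hij
    · subst hij; field_simp
    · simp
  · change ∑ i, σ i = _
    rw [← Finset.sum_filter_ne_zero, ← Finset.sum_coe_sort]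
    refine Finset.sum_congr rfl fun ⟨i, hi⟩ _ => ?_
    rw [Finset.mem_filter_univ] at hi
    simp only [real_inner_smul_left, hinner, if_pos]
    field_simp

theorem nuclearNorm_conjTranspose_mul_le [DecidableEq l] (A : Matrix l m ℝ) (B : Matrix l n ℝ) :
    nuclearNorm (Aᴴ * B) ≤ ((Aᴴ * A).trace + (Bᴴ * B).trace) / 2 := by
  obtain ⟨s, u, v, hu, hv, hnorm⟩ := exists_orthonormal_nuclearNorm_eq_sum_inner (Aᴴ * B)
  have hamgm : ∀ x y : EuclideanSpace ℝ l, ⟪x, y⟫_ℝ ≤ (‖x‖ ^ 2 + ‖y‖ ^ 2) / 2 := fun x y => by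
    nlinarith [real_inner_le_norm x y, two_mul_le_add_sq ‖x‖ ‖y‖]
  calc nuclearNorm (Aᴴ * B)
      = ∑ i, ⟪toEuclideanLin A (u i), toEuclideanLin B (v i)⟫_ℝ := by
        simp only [hnorm, inner_toEuclideanLin_conjTranspose_mul]
    _ ≤ ∑ i, (‖toEuclideanLin A (u i)‖ ^ 2 + ‖toEuclideanLin B (v i)‖ ^ 2) / 2 :=
        Finset.sum_le_sum fun i _ => hamgm _ _
    _ = (∑ i, ‖toEuclideanLin A (u i)‖ ^ 2 + ∑ i, ‖toEuclideanLin B (v i)‖ ^ 2) / 2 := by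
        rw [← Finset.sum_div, Finset.sum_add_distrib]
    _ ≤ ((Aᴴ * A).trace + (Bᴴ * B).trace) / 2 := by
        gcongr
        · exact sum_norm_sq_toEuclideanLin_le_trace A hu
        · exact sum_norm_sq_toEuclideanLin_le_trace B hv

theorem Matrix.trace_diagonal_sqrt_mul_mul_diagonal_sqrt (K : Matrix n n ℝ) {P : n → ℝ}
    (hP : ∀ i, 0 ≤ P i) :
    (diagonal (fun i => √(P i)) * K * diagonal (fun i => √(P i))).trace = ∑ i, P i * K i i := by
  refine Finset.sum_congr rfl fun i _ => ?_
  rw [diag_apply, mul_diagonal, diagonal_mul, mul_right_comm, Real.mul_self_sqrt (hP i)]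

theorem nuclearNorm_diag_kernel_le_general (n : ℕ) (K : Matrix (Fin n) (Fin n) ℝ)
    (hK : K.PosSemidef) (c : ℝ) (hdiag : ∀ i, K i i = c)
    (P Q : Fin n → ℝ) (hP : ∀ i, 0 ≤ P i) (hQ : ∀ i, 0 ≤ Q i)
    (hPsum : ∑ i, P i = 1) (hQsum : ∑ i, Q i = 1) :
    nuclearNorm (Matrix.diagonal (fun i => Real.sqrt (P i)) * K *
      Matrix.diagonal (fun i => Real.sqrt (Q i))) ≤ c := by
  obtain ⟨L, rfl⟩ : ∃ L : Matrix (Fin n) (Fin n) ℝ, K = star L * L := by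
    open scoped MatrixOrder in exact CStarAlgebra.nonneg_iff_eq_star_mul_self.mp hK.nonneg
  have hfactor : ∀ d e : Fin n → ℝ,
      diagonal d * (star L * L) * diagonal e = (L * diagonal d)ᴴ * (L * diagonal e) := by
    intro d e
    simp only [conjTranspose_mul, diagonal_conjTranspose, star_trivial, star_eq_conjTranspose,
      Matrix.mul_assoc]
  have htrace : ∀ R : Fin n → ℝ, (∀ i, 0 ≤ R i) → ∑ i, R i = 1 →
      ((L * diagonal fun i => √(R i))ᴴ * (L * diagonal fun i => √(R i))).trace = c := by
    intro R hR hRsum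
    rw [← hfactor, trace_diagonal_sqrt_mul_mul_diagonal_sqrt _ hR]
    simp only [hdiag, ← Finset.sum_mul, hRsum, one_mul]
  rw [hfactor]
  refine (nuclearNorm_conjTranspose_mul_le _ _).trans_eq ?_
  rw [htrace P hP hPsum, htrace Q hQ hQsum]
  ring

/-- If `K` is PSD with constant diagonal `c > 0` and `P, Q` are probability
vectors, then `‖diag(√P) K diag(√Q)‖_* ≤ c`. -/
theorem nuclearNorm_diag_kernel_le (n : ℕ) (K : Matrix (Fin n) (Fin n) ℝ)
    (hK : K.PosSemidef) (c : ℝ) (hc : 0 < c) (hdiag : ∀ i, K i i = c)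
    (P Q : Fin n → ℝ) (hP : ∀ i, 0 ≤ P i) (hQ : ∀ i, 0 ≤ Q i)
    (hPsum : ∑ i, P i = 1) (hQsum : ∑ i, Q i = 1) :
    nuclearNorm (Matrix.diagonal (fun i => Real.sqrt (P i)) * K *
      Matrix.diagonal (fun i => Real.sqrt (Q i))) ≤ c :=
  nuclearNorm_diag_kernel_le_general n K hK c hdiag P Q hP hQ hPsum hQsum
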